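/- arXiv:1511.05023 — 3 statements merged into one kernel-verified Lean document; each statement's English description precedes it below -/
import Mathlib

section
/- Let A be chosen uniformly at random from the 2^n binary (±1) sequences of length n ≥ 2, let μ(A) = max_{1≤k≤n-1} |c_k| where c_k = ∑_{j=0}^{n-k-1} a_j a_{j+k}, and let ψ = ψ(n) > 0. Then P[μ(A) > √(2nψ)] < 2n/(ψ e^{ψ}). -/
open scoped Classical

/-- The `j`-th entry (as `±1 : ℝ`) of the binary sequence encoded by `b`. -/
noncomputable def rad {n : ℕ} (b : Fin n → Bool) (j : ℕ) : ℝ :=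
  if h : j < n then (if b ⟨j, h⟩ then 1 else -1) else 0

/-- The aperiodic autocorrelation at shift `k`. -/
noncomputable def autocorr {n : ℕ} (b : Fin n → Bool) (k : ℕ) : ℝ :=
  ∑ j ∈ Finset.range (n - k), rad b j * rad b (j + k)

/-- The peak sidelobe level `μ(A) = max_{1 ≤ k ≤ n-1} |c_k|`. -/
noncomputable def psl {n : ℕ} (b : Fin n → Bool) : ℝ :=
  ⨆ k ∈ Finset.Icc 1 (n - 1), |autocorr b k|

/-! For a fixed shift `k`, the products `a_j a_{j+k}` (`j < n - k`) are independent uniform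
signs: together with the first `k` entries they determine the whole sequence, so the map
`a ↦ (a_0, …, a_{k-1}, (a_j a_{j+k})_j)` is a bijection. Hence `c_k` is a Rademacher sum of
length `n - k`, and the Chernoff bound with `cosh λ ≤ exp (λ² / 2)` gives
`P[|c_k| > t] ≤ 2 exp (-t² / (2 (n - k)))`. For `t² = 2nψ` the union bound over `k` leaves
`2 ∑ₖ exp (-nψ / (n - k)) ≤ 2 e^{-ψ} ∑_{k ≥ 1} e^{-kψ/n} < 2n e^{-ψ} / ψ`. -/

open Finset Real

noncomputable def boolSign (b : Bool) : ℝ := if b then 1 else -1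

noncomputable def signSum {m : ℕ} (x : Fin m → Bool) : ℝ := ∑ j, boolSign (x j)

lemma sum_exp_mul_signSum (m : ℕ) (l : ℝ) :
    ∑ x : Fin m → Bool, exp (l * signSum x) = (2 * cosh l) ^ m := by
  simp only [signSum, mul_sum, exp_sum]
  rw [← Fintype.prod_sum (fun _ b => exp (l * boolSign b)), prod_const, card_univ,
    Fintype.card_fin, Fintype.sum_bool, cosh_eq]
  simp only [boolSign, ↓reduceIte, mul_one, Bool.false_eq_true, mul_neg]
  ring

lemma card_lt_abs_signSum_mul_exp_le (m : ℕ) (t : ℝ) {l : ℝ} (hl : 0 ≤ l) :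
    #{x : Fin m → Bool | t < |signSum x|} * exp (l * t) ≤ 2 * (2 * cosh l) ^ m := by
  calc #{x : Fin m → Bool | t < |signSum x|} * exp (l * t)
      ≤ ∑ x ∈ {x : Fin m → Bool | t < |signSum x|}, exp (l * |signSum x|) := by
        rw [← nsmul_eq_mul]
        refine card_nsmul_le_sum _ _ _ fun x hx => exp_le_exp.2 ?_
        exact mul_le_mul_of_nonneg_left (mem_filter.1 hx).2.le hl
    _ ≤ ∑ x : Fin m → Bool, (exp (l * signSum x) + exp ((-l) * signSum x)) := by
        refine sum_le_sum_of_subset_of_nonneg (subset_univ _) (fun _ _ _ => by positivity)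
          |>.trans (sum_le_sum fun x _ => ?_)
        have h := exp_abs_le (l * signSum x)
        rwa [abs_mul, abs_of_nonneg hl, ← neg_mul] at h
    _ = 2 * (2 * cosh l) ^ m := by
        rw [sum_add_distrib, sum_exp_mul_signSum, sum_exp_mul_signSum, cosh_neg]
        ring

lemma card_lt_abs_signSum_le {m : ℕ} (hm : 0 < m) {t : ℝ} (ht : 0 ≤ t) :
    (#{x : Fin m → Bool | t < |signSum x|} : ℝ) ≤ 2 * 2 ^ m * exp (-t ^ 2 / (2 * m)) := by
  have hm' : (0 : ℝ) < m := Nat.cast_pos.2 hm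
  have hbound := card_lt_abs_signSum_mul_exp_le m t (div_nonneg ht hm'.le)
  rw [← le_div_iff₀ (exp_pos _)] at hbound
  refine hbound.trans ?_
  calc 2 * (2 * cosh (t / m)) ^ m / exp (t / m * t)
      ≤ 2 * (2 * exp ((t / m) ^ 2 / 2)) ^ m / exp (t / m * t) := by
        gcongr; exact cosh_le_exp_half_sq _
    _ = 2 * 2 ^ m * exp (-t ^ 2 / (2 * m)) := by
        rw [mul_pow, ← exp_nat_mul, mul_assoc, mul_div_assoc, mul_div_assoc, ← exp_sub]
        congr 3
        field_simp
        ring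

lemma card_filter_snd_of_bijective {α β γ : Type*} [Fintype α] [Fintype β] [Fintype γ]
    {f : α → β × γ} (hf : f.Bijective) (p : γ → Prop) :
    #{a | p (f a).2} = Fintype.card β * #{c | p c} := by
  rw [card_bijective f hf (t := (univ : Finset β) ×ˢ ({c | p c} : Finset γ)) (by simp),
    card_product, card_univ]

section Autocorrelation

variable {n : ℕ}

def corrPattern (k : ℕ) (b : Fin n → Bool) : Fin (n - k) → Bool :=
  fun j => b ⟨j, by omega⟩ == b ⟨j + k, by omega⟩

lemma autocorr_eq_signSum (b : Fin n → Bool) (k : ℕ) :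
    autocorr b k = signSum (corrPattern k b) := by
  rw [autocorr, signSum, ← Fin.sum_univ_eq_sum_range]
  refine sum_congr rfl fun j _ => ?_
  rw [rad, dif_pos (by omega), rad, dif_pos (by omega), corrPattern]
  cases b ⟨j, _⟩ <;> cases b ⟨j + k, _⟩ <;> simp [boolSign]

lemma bijective_prefix_corrPattern {k : ℕ} (hk : 0 < k) (hkn : k ≤ n) :
    (fun b : Fin n → Bool =>
      (fun i : Fin k => b (Fin.castLE hkn i), corrPattern k b)).Bijective := by
  refine (Fintype.bijective_iff_injective_and_card _).2 ⟨fun b b' h => ?_, ?_⟩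
  · simp only [Prod.mk.injEq] at h
    obtain ⟨hprefix, hpattern⟩ := h
    suffices ∀ j (hj : j < n), b ⟨j, hj⟩ = b' ⟨j, hj⟩ from funext fun j => this j j.2
    intro j
    induction j using Nat.strong_induction_on with
    | _ j ih =>
      intro hj
      by_cases hjk : j < k
      · exact congrFun hprefix ⟨j, hjk⟩
      · -- `b j` is recovered from `b (j - k)` and the pattern entry `b (j - k) == b j`
        have hpat := congrFun hpattern ⟨j - k, by omega⟩
        have hidx : (⟨j - k + k, by omega⟩ : Fin n) = ⟨j, hj⟩ := Fin.ext (Nat.sub_add_cancel (by omega))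
        simp only [corrPattern, hidx, ih (j - k) (by omega) (by omega)] at hpat
        revert hpat; cases b' ⟨j - k, by omega⟩ <;> simp
  · simp [← pow_add, Nat.add_sub_cancel' hkn]

lemma card_filter_corrPattern {k : ℕ} (hk : 0 < k) (hkn : k ≤ n)
    (p : (Fin (n - k) → Bool) → Prop) :
    #{b : Fin n → Bool | p (corrPattern k b)} = 2 ^ k * #{x | p x} := by
  simpa using card_filter_snd_of_bijective (bijective_prefix_corrPattern hk hkn) p

end Autocorrelation

lemma card_lt_abs_autocorr_le {n k : ℕ} (hk : 0 < k) (hkn : k < n) {t : ℝ} (ht : 0 ≤ t) :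
    (#{b : Fin n → Bool | t < |autocorr b k|} : ℝ)
      ≤ 2 * 2 ^ n * exp (-t ^ 2 / (2 * (n - k : ℕ))) := by
  simp_rw [autocorr_eq_signSum]
  rw [card_filter_corrPattern hk hkn.le (fun x => t < |signSum x|), Nat.cast_mul, Nat.cast_pow,
    Nat.cast_ofNat]
  calc (2 : ℝ) ^ k * #{x : Fin (n - k) → Bool | t < |signSum x|}
      ≤ 2 ^ k * (2 * 2 ^ (n - k) * exp (-t ^ 2 / (2 * (n - k : ℕ)))) := by
        gcongr; exact card_lt_abs_signSum_le (by omega) ht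
    _ = 2 * 2 ^ n * exp (-t ^ 2 / (2 * (n - k : ℕ))) := by
        rw [← Nat.add_sub_cancel' hkn.le, pow_add, Nat.add_sub_cancel_left]; ring

lemma exists_lt_abs_autocorr_of_lt_psl {n : ℕ} {b : Fin n → Bool} {t : ℝ} (ht : 0 ≤ t)
    (h : t < psl b) : ∃ k ∈ Icc 1 (n - 1), t < |autocorr b k| := by
  by_contra! hle
  exact h.not_ge (Real.iSup_le (fun k => Real.iSup_le (hle k) ht) ht)

lemma card_lt_psl_le_sum {n : ℕ} {t : ℝ} (ht : 0 ≤ t) :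
    #{b : Fin n → Bool | t < psl b}
      ≤ ∑ k ∈ Icc 1 (n - 1), #{b : Fin n → Bool | t < |autocorr b k|} := by
  refine (card_le_card fun b hb => ?_).trans card_biUnion_le
  obtain ⟨k, hk, hlt⟩ := exists_lt_abs_autocorr_of_lt_psl ht (mem_filter.1 hb).2
  exact mem_biUnion.2 ⟨k, hk, mem_filter.2 ⟨mem_univ b, hlt⟩⟩

lemma exp_neg_mul_div_sub_le {n k : ℕ} (hkn : k < n) {ψ : ℝ} (hψ : 0 ≤ ψ) :
    exp (-(n * ψ) / (n - k : ℕ)) ≤ exp (-ψ) * exp (-(ψ / n)) ^ k := by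
  have hn : (0 : ℝ) < n := by exact_mod_cast hkn.trans_le' k.zero_le
  have hnk : (0 : ℝ) < (n - k : ℕ) := by exact_mod_cast Nat.sub_pos_of_lt hkn
  rw [← exp_nat_mul, ← exp_add, exp_le_exp,
    show -ψ + k * -(ψ / n) = -(ψ * (n + k)) / n by field_simp; ring, div_le_div_iff₀ hnk hn,
    Nat.cast_sub hkn.le]
  -- `n / (n - k) ≥ (n + k) / n` because `n ^ 2 ≥ n ^ 2 - k ^ 2`
  nlinarith [mul_nonneg hψ (sq_nonneg (k : ℝ))]

lemma exp_neg_div_one_sub_exp_neg_lt {x : ℝ} (hx : 0 < x) :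
    exp (-x) / (1 - exp (-x)) < 1 / x := by
  have hexp : exp (-x) * exp x = 1 := by rw [← exp_add, neg_add_cancel, exp_zero]
  have hlt : exp (-x) * (x + 1) < exp (-x) * exp x :=
    mul_lt_mul_of_pos_left (add_one_lt_exp hx.ne') (exp_pos _)
  have hlt1 : exp (-x) < 1 := exp_lt_one_iff.2 (neg_lt_zero.2 hx)
  rw [div_lt_div_iff₀ (sub_pos.2 hlt1) hx]
  linarith

lemma sum_exp_neg_mul_div_sub_lt {n : ℕ} (hn : 0 < n) {ψ : ℝ} (hψ : 0 < ψ) :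
    ∑ k ∈ Icc 1 (n - 1), exp (-(n * ψ) / (n - k : ℕ)) < n * exp (-ψ) / ψ := by
  have hn' : (0 : ℝ) < n := Nat.cast_pos.2 hn
  set q := exp (-(ψ / n))
  have hq1 : q < 1 := exp_lt_one_iff.2 (neg_lt_zero.2 (by positivity))
  calc ∑ k ∈ Icc 1 (n - 1), exp (-(n * ψ) / (n - k : ℕ))
      ≤ ∑ k ∈ Ico 1 n, exp (-ψ) * q ^ k := by
        rw [show Icc 1 (n - 1) = Ico 1 n by ext; simp; omega]
        exact sum_le_sum fun k hk => exp_neg_mul_div_sub_le (mem_Ico.1 hk).2 hψ.le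
    _ ≤ exp (-ψ) * (q ^ 1 / (1 - q)) := by
        rw [← mul_sum]; gcongr; exact geom_sum_Ico_le_of_lt_one (exp_pos _).le hq1
    _ < exp (-ψ) * (1 / (ψ / n)) := by
        rw [pow_one]
        exact mul_lt_mul_of_pos_left (exp_neg_div_one_sub_exp_neg_lt (by positivity)) (exp_pos _)
    _ = n * exp (-ψ) / ψ := by field_simp

theorem stmt_9 (n : ℕ) (hn : 2 ≤ n) (ψ : ℝ) (hψ : 0 < ψ) :
    ((Finset.univ.filter fun b : Fin n → Bool =>
        Real.sqrt (2 * n * ψ) < psl b).card : ℝ) / 2 ^ n <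
      2 * n / (ψ * Real.exp ψ) := by
  set t := √(2 * n * ψ)
  have ht2 : t ^ 2 = 2 * n * ψ := sq_sqrt (by positivity)
  have hcount : (#{b : Fin n → Bool | t < psl b} : ℝ) < 2 * 2 ^ n * (n * exp (-ψ) / ψ) :=
    calc (#{b : Fin n → Bool | t < psl b} : ℝ)
        ≤ ∑ k ∈ Icc 1 (n - 1), (#{b : Fin n → Bool | t < |autocorr b k|} : ℝ) := by
          exact_mod_cast card_lt_psl_le_sum (sqrt_nonneg _)
      _ ≤ ∑ k ∈ Icc 1 (n - 1), 2 * 2 ^ n * exp (-(n * ψ) / (n - k : ℕ)) := by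
          refine sum_le_sum fun k hk => ?_
          have hk' := mem_Icc.1 hk
          have := card_lt_abs_autocorr_le (n := n) hk'.1 (by omega) (sqrt_nonneg (2 * n * ψ))
          rwa [ht2, show -(2 * n * ψ) / (2 * (n - k : ℕ)) = -(n * ψ) / (n - k : ℕ) by ring]
            at this
      _ < 2 * 2 ^ n * (n * exp (-ψ) / ψ) := by
          rw [← mul_sum]; gcongr; exact sum_exp_neg_mul_div_sub_lt (by omega) hψ
  rw [div_lt_iff₀ (by positivity)]
  rwa [show 2 * n / (ψ * exp ψ) * 2 ^ n = 2 * 2 ^ n * (n * exp (-ψ) / ψ) by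
    rw [exp_neg]; field_simp]
end

section
/- Fix ε > 0. For A uniform on binary ±1 sequences of length n with peak sidelobe level μ(A) = max_{1≤k≤n-1}|c_k|, the probability P[μ(A) > √(2n(log n - (1-ε) log log n))] tends to 0 as n → ∞. -/
open scoped Classical

/-!
Each sidelobe `c_k` (`k ≥ 1`) is a sum of `n - k` products `a_j a_{j+k}` whose moment generating
function is exactly `cosh t ^ (n - k)`: writing `exp (t a_j a_{j+k}) = cosh t + a_j a_{j+k} sinh t`
and expanding, every product of the `a_j a_{j+k}` over a nonempty set of `j` averages to zero, as
flipping the sign `a_j` at the smallest such `j` negates it. Chernoff's bound then gives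
`P[|c_k| > λ] ≤ 2 exp (-λ² / (2 (n - k)))`. For `λ² = 2 n L`, the inequality
`n / (n - k) ≥ 1 + k / n` and the union bound over `k` give
`P[μ(A) > λ] ≤ 2 e^{-L} ∑_{k ≥ 1} e^{-k L / n} ≤ 2 n e^{-L} / L`, which for
`L = log n - (1 - ε) log log n` equals `2 (log n)^{-ε} · log n / L → 0`.
-/

open Finset Filter Real Topology

section Rad

variable {n : ℕ} (b : Fin n → Bool)

lemma rad_sq {j : ℕ} (hj : j < n) : rad b j ^ 2 = 1 := by
  unfold rad
  rw [dif_pos hj]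
  cases b ⟨j, hj⟩ <;> norm_num

lemma rad_update_of_ne (i : Fin n) (x : Bool) {m : ℕ} (hm : m ≠ i) :
    rad (Function.update b i x) m = rad b m := by
  unfold rad
  by_cases h : m < n
  · rw [dif_pos h, dif_pos h, Function.update_of_ne
      (show (⟨m, h⟩ : Fin n) ≠ i from fun he => hm (congrArg Fin.val he))]
  · rw [dif_neg h, dif_neg h]

lemma rad_update_not_self (i : Fin n) : rad (Function.update b i (!b i)) i = -rad b i := by
  simp only [rad, dif_pos i.isLt, Fin.eta, Function.update_self]
  cases b i <;> simp

end Rad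

/-- Flipping the sign at `j₀ = min S` negates the product, as `j + k = j₀` forces `j ∉ S`. -/
lemma sum_prod_rad_mul_rad_add_eq_zero {n k : ℕ} (hk : 1 ≤ k) {S : Finset ℕ}
    (hS : S ⊆ range n) (hne : S.Nonempty) :
    ∑ b : Fin n → Bool, ∏ j ∈ S, rad b j * rad b (j + k) = 0 := by
  have hmin := S.min'_mem hne
  let i : Fin n := ⟨S.min' hne, by have := mem_range.1 (hS hmin); omega⟩
  let flip : (Fin n → Bool) → Fin n → Bool := fun b => Function.update b i (!b i)
  have hflip : ∀ b, ∏ j ∈ S, rad (flip b) j * rad (flip b) (j + k) =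
      -∏ j ∈ S, rad b j * rad b (j + k) := by
    intro b
    rw [← mul_prod_erase S _ hmin, ← mul_prod_erase S (fun j => rad b j * rad b (j + k)) hmin,
      rad_update_not_self, rad_update_of_ne _ _ _ (by simp [i]; omega),
      prod_congr rfl fun j hj => ?_]
    · ring
    have hle := S.min'_le j (mem_of_mem_erase hj)
    have hjne := ne_of_mem_erase hj
    rw [rad_update_of_ne _ _ _ (by simpa [i] using hjne),
      rad_update_of_ne _ _ _ (by simp [i]; omega)]
  refine sum_ninvolution flip (fun b => by rw [hflip]; ring) (fun b _ h => ?_)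
    (fun _ => mem_univ _) (fun b => by simp [flip])
  simpa [flip] using congrFun h i

lemma exp_mul_eq_cosh_add_mul_sinh (t : ℝ) {x : ℝ} (hx : x ^ 2 = 1) :
    exp (t * x) = cosh t + x * sinh t := by
  rcases sq_eq_one_iff.1 hx with rfl | rfl
  · simp [cosh_add_sinh]
  · simp [← cosh_sub_sinh, sub_eq_add_neg]

lemma sum_exp_mul_autocorr {n k : ℕ} (hk : 1 ≤ k) (t : ℝ) :
    ∑ b : Fin n → Bool, exp (t * autocorr b k) = 2 ^ n * cosh t ^ (n - k) := by
  have hexpand : ∀ b : Fin n → Bool, exp (t * autocorr b k) =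
      ∑ S ∈ (range (n - k)).powerset,
        (∏ j ∈ S, rad b j * rad b (j + k) * sinh t) * ∏ j ∈ range (n - k) \ S, cosh t := by
    intro b
    rw [autocorr, mul_sum, exp_sum, ← prod_add]
    refine prod_congr rfl fun j hj => ?_
    have hj := mem_range.1 hj
    have hsq : (rad b j * rad b (j + k)) ^ 2 = 1 := by
      rw [mul_pow, rad_sq b (by omega), rad_sq b (by omega), one_mul]
    rw [exp_mul_eq_cosh_add_mul_sinh t hsq, add_comm]
  rw [sum_congr rfl fun b _ => hexpand b, sum_comm, sum_eq_single ∅]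
  · simp
  · intro S hS hne
    have hfactor : ∀ b : Fin n → Bool,
        (∏ j ∈ S, rad b j * rad b (j + k) * sinh t) * ∏ j ∈ range (n - k) \ S, cosh t =
          (∏ j ∈ S, rad b j * rad b (j + k)) *
            ((∏ j ∈ S, sinh t) * ∏ j ∈ range (n - k) \ S, cosh t) :=
      fun b => by rw [prod_mul_distrib, mul_assoc]
    rw [sum_congr rfl fun b _ => hfactor b, ← sum_mul,
      sum_prod_rad_mul_rad_add_eq_zero hk
        ((mem_powerset.1 hS).trans (range_subset_range.2 (n.sub_le k)))
        (nonempty_iff_ne_empty.2 hne), zero_mul]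
  · simp

section Chernoff

variable {α : Type*} [Fintype α] (c : α → ℝ) {C m lam : ℝ}

lemma card_filter_lt_le_of_sum_exp_le (hm : 0 < m)
    (hmgf : ∀ t, ∑ a, exp (t * c a) ≤ C * exp (m * t ^ 2 / 2)) (hlam : 0 ≤ lam) :
    (#{a | lam < c a} : ℝ) ≤ C * exp (-(lam ^ 2 / (2 * m))) := by
  set t := lam / m
  have hmarkov : (#{a | lam < c a} : ℝ) * exp (t * lam) ≤ ∑ a, exp (t * c a) :=
    calc (#{a | lam < c a} : ℝ) * exp (t * lam)
          = ∑ a ∈ {a | lam < c a}, exp (t * lam) := by rw [sum_const, nsmul_eq_mul]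
      _ ≤ ∑ a ∈ {a | lam < c a}, exp (t * c a) := sum_le_sum fun a ha =>
          exp_le_exp.2 (mul_le_mul_of_nonneg_left (mem_filter.1 ha).2.le (by positivity))
      _ ≤ ∑ a, exp (t * c a) := sum_le_univ_sum_of_nonneg fun a => (exp_pos _).le
  have hopt : m * t ^ 2 / 2 + -(t * lam) = -(lam ^ 2 / (2 * m)) := by
    simp only [t]
    field_simp
    ring
  calc (#{a | lam < c a} : ℝ) = #{a | lam < c a} * exp (t * lam) * exp (-(t * lam)) := by
        rw [mul_assoc, ← exp_add, add_neg_cancel, exp_zero, mul_one]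
    _ ≤ C * exp (m * t ^ 2 / 2) * exp (-(t * lam)) := by
        gcongr ?_ * _
        exact hmarkov.trans (hmgf t)
    _ = C * exp (-(lam ^ 2 / (2 * m))) := by rw [mul_assoc, ← exp_add, hopt]

lemma card_filter_lt_abs_le_of_sum_exp_le (hm : 0 < m)
    (hmgf : ∀ t, ∑ a, exp (t * c a) ≤ C * exp (m * t ^ 2 / 2)) (hlam : 0 ≤ lam) :
    (#{a | lam < |c a|} : ℝ) ≤ 2 * C * exp (-(lam ^ 2 / (2 * m))) := by
  have hsub : ({a | lam < |c a|} : Finset α) ⊆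
      ({a | lam < c a} : Finset α) ∪ ({a | lam < -c a} : Finset α) := by
    intro a
    simp only [mem_filter, mem_union, mem_univ, true_and]
    exact lt_abs.1
  have hmgf_neg : ∀ t, ∑ a, exp (t * -c a) ≤ C * exp (m * t ^ 2 / 2) := fun t => by
    simpa only [neg_mul, mul_neg, neg_sq] using hmgf (-t)
  calc (#{a | lam < |c a|} : ℝ) ≤ #{a | lam < c a} + #{a | lam < -c a} := by
        exact_mod_cast (card_le_card hsub).trans (card_union_le _ _)
    _ ≤ C * exp (-(lam ^ 2 / (2 * m))) + C * exp (-(lam ^ 2 / (2 * m))) :=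
        add_le_add (card_filter_lt_le_of_sum_exp_le c hm hmgf hlam)
          (card_filter_lt_le_of_sum_exp_le (fun a => -c a) hm hmgf_neg hlam)
    _ = 2 * C * exp (-(lam ^ 2 / (2 * m))) := by ring

end Chernoff

lemma card_filter_lt_abs_autocorr_le {n k : ℕ} (hk : 1 ≤ k) (hkn : k < n) {lam : ℝ}
    (hlam : 0 ≤ lam) :
    (#{b : Fin n → Bool | lam < |autocorr b k|} : ℝ) ≤
      2 * 2 ^ n * exp (-(lam ^ 2 / (2 * (n - k : ℕ)))) := by
  refine card_filter_lt_abs_le_of_sum_exp_le _ (by exact_mod_cast (by omega : 0 < n - k))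
    (fun t => ?_) hlam
  rw [sum_exp_mul_autocorr hk, mul_div_assoc, exp_nat_mul]
  gcongr
  exact cosh_le_exp_half_sq t

lemma card_filter_lt_psl_le {n : ℕ} {lam : ℝ} (hlam : 0 ≤ lam) :
    #{b : Fin n → Bool | lam < psl b} ≤
      ∑ k ∈ Icc 1 (n - 1), #{b : Fin n → Bool | lam < |autocorr b k|} := by
  refine (card_le_card fun b hb => ?_).trans card_biUnion_le
  simp only [mem_filter, mem_univ, true_and, mem_biUnion] at hb ⊢
  by_contra! h
  exact hb.not_ge (Real.iSup_le (fun k => Real.iSup_le (h k) hlam) hlam)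

lemma sum_Icc_exp_neg_mul_div_le (n : ℕ) {L : ℝ} (hL : 0 < L) :
    ∑ k ∈ Icc 1 (n - 1), exp (-(n * L / (n - k : ℕ))) ≤ exp (-L) * (n / L) := by
  rcases Nat.eq_zero_or_pos n with rfl | hn₀
  · simp
  have hn : (0 : ℝ) < n := by exact_mod_cast hn₀
  set r := exp (-(L / n))
  have hterm : ∀ k ∈ Icc 1 (n - 1), exp (-(n * L / (n - k : ℕ))) ≤ exp (-L) * r ^ k := by
    intro k hk
    have hkn : k < n := by have := mem_Icc.1 hk; omega
    have hkR : (k : ℝ) < n := by exact_mod_cast hkn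
    rw [← exp_nat_mul, ← exp_add, exp_le_exp, Nat.cast_sub hkn.le]
    have hkey : L + k * (L / n) ≤ n * L / (n - k) := by
      rw [le_div_iff₀ (by linarith)]
      have hexpand : (L + k * (L / n)) * (n - k) = n * L - k ^ 2 * L / n := by
        field_simp
        ring
      have : 0 ≤ k ^ 2 * L / n := by positivity
      linarith
    linarith
  have hr1 : r < 1 := exp_lt_one_iff.2 (by simp only [Left.neg_neg_iff]; positivity)
  have hgeom : ∑ k ∈ Icc 1 (n - 1), r ^ k ≤ r / (1 - r) := by
    calc ∑ k ∈ Icc 1 (n - 1), r ^ k ≤ ∑ k ∈ Ico 1 n, r ^ k :=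
          sum_le_sum_of_subset_of_nonneg (fun k hk => by simp at hk ⊢; omega)
            fun _ _ _ => by positivity
      _ ≤ r / (1 - r) := by simpa using geom_sum_Ico_le_of_lt_one (m := 1) (exp_pos _).le hr1
  have hratio : r / (1 - r) ≤ n / L := by
    have hexp : (L / n + 1) * r ≤ 1 :=
      calc (L / n + 1) * r ≤ exp (L / n) * r := by gcongr; exact add_one_le_exp _
        _ = 1 := by rw [← exp_add, add_neg_cancel, exp_zero]
    rw [div_add_one hn.ne', div_mul_eq_mul_div, div_le_one hn] at hexp
    rw [div_le_div_iff₀ (sub_pos.2 hr1) hL]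
    linarith
  calc ∑ k ∈ Icc 1 (n - 1), exp (-(n * L / (n - k : ℕ)))
      ≤ ∑ k ∈ Icc 1 (n - 1), exp (-L) * r ^ k := sum_le_sum hterm
    _ ≤ exp (-L) * (n / L) := by
        rw [← mul_sum]
        gcongr
        exact hgeom.trans hratio

lemma card_sqrt_lt_psl_div_le (n : ℕ) {L : ℝ} (hL : 0 < L) :
    (#{b : Fin n → Bool | √(2 * n * L) < psl b} : ℝ) / 2 ^ n ≤ 2 * (n * exp (-L) / L) := by
  have hlam : 0 ≤ √(2 * n * L) := sqrt_nonneg _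
  have hlam_sq : √(2 * n * L) ^ 2 = 2 * n * L := sq_sqrt (by positivity)
  rw [div_le_iff₀ (by positivity)]
  calc (#{b : Fin n → Bool | √(2 * n * L) < psl b} : ℝ)
      ≤ ∑ k ∈ Icc 1 (n - 1),
          (#{b : Fin n → Bool | √(2 * n * L) < |autocorr b k|} : ℝ) := by
        exact_mod_cast card_filter_lt_psl_le hlam
    _ ≤ ∑ k ∈ Icc 1 (n - 1), 2 * 2 ^ n * exp (-(n * L / (n - k : ℕ))) := by
        refine sum_le_sum fun k hk => ?_
        have hk := mem_Icc.1 hk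
        refine (card_filter_lt_abs_autocorr_le (k := k) (by omega) (by omega) hlam).trans_eq ?_
        rw [hlam_sq, mul_assoc 2 (n : ℝ) L, mul_div_mul_left _ _ two_ne_zero]
    _ = 2 * 2 ^ n * ∑ k ∈ Icc 1 (n - 1), exp (-(n * L / (n - k : ℕ))) := (mul_sum _ _ _).symm
    _ ≤ 2 * 2 ^ n * (exp (-L) * (n / L)) := by gcongr; exact sum_Icc_exp_neg_mul_div_le n hL
    _ = 2 * (n * exp (-L) / L) * 2 ^ n := by ring

lemma tendsto_log_sub_mul_log_log_div_log (c : ℝ) :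
    Tendsto (fun x => (log x - c * log (log x)) / log x) atTop (𝓝 1) := by
  have hlim :=
    ((isLittleO_log_id_atTop.tendsto_div_nhds_zero.comp tendsto_log_atTop).const_mul c).const_sub 1
  rw [mul_zero, sub_zero] at hlim
  refine hlim.congr' ?_
  filter_upwards [tendsto_log_atTop.eventually_gt_atTop 0] with x hx
  simp only [Function.comp_apply, id]
  field_simp

lemma tendsto_mul_exp_neg_log_sub_mul_log_log_div {ε : ℝ} (hε : 0 < ε) :
    Tendsto (fun x => x * exp (-(log x - (1 - ε) * log (log x))) /
      (log x - (1 - ε) * log (log x))) atTop (𝓝 0) := by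
  have hdecay : Tendsto (fun x => exp (-(ε * log (log x)))) atTop (𝓝 0) :=
    tendsto_exp_atBot.comp <| tendsto_neg_atTop_atBot.comp <|
      (tendsto_log_atTop.comp tendsto_log_atTop).const_mul_atTop hε
  have hlim := hdecay.mul ((tendsto_log_sub_mul_log_log_div_log (1 - ε)).inv₀ one_ne_zero)
  rw [zero_mul] at hlim
  refine hlim.congr' ?_
  filter_upwards [tendsto_log_atTop.eventually_gt_atTop 0, eventually_gt_atTop 0] with x hℓ hx
  have hscale : x * exp (-(log x - (1 - ε) * log (log x))) = exp (-(ε * log (log x))) * log x :=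
    calc x * exp (-(log x - (1 - ε) * log (log x)))
        = exp (log x + -(log x - (1 - ε) * log (log x))) := by rw [exp_add, exp_log hx]
      _ = exp (-(ε * log (log x)) + log (log x)) := by ring_nf
      _ = exp (-(ε * log (log x))) * log x := by rw [exp_add, exp_log hℓ]
  rw [hscale, inv_div]
  ring

theorem stmt_11 (ε : ℝ) (hε : 0 < ε) :
    Filter.Tendsto
      (fun n : ℕ =>
        ((Finset.univ.filter fun b : Fin n → Bool =>
            Real.sqrt (2 * n * (Real.log n - (1 - ε) * Real.log (Real.log n))) < psl b).card : ℝ)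
          / 2 ^ n)
      Filter.atTop (nhds 0) := by
  have hbound :=
    ((tendsto_mul_exp_neg_log_sub_mul_log_log_div hε).comp tendsto_natCast_atTop_atTop).const_mul 2
  rw [mul_zero] at hbound
  refine squeeze_zero' (Eventually.of_forall fun n => by positivity) ?_ hbound
  have hratio := (tendsto_log_sub_mul_log_log_div_log (1 - ε)).comp tendsto_natCast_atTop_atTop
  have hlog := tendsto_log_atTop.comp tendsto_natCast_atTop_atTop
  filter_upwards [hratio.eventually_const_lt one_pos, hlog.eventually_gt_atTop 0] with n hpos hℓ
  exact card_sqrt_lt_psl_div_le n ((div_pos_iff_of_pos_right hℓ).1 hpos)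
end

section
/- For every integer n > 1, with ψ(n) = log n - log log n + 0.862, we have ψ(n)·e^{ψ(n)} ≥ (e^{0.862} - 1/e)·n > 2.00001·n, and hence 2n/(ψ(n)·e^{ψ(n)}) < 1. -/
/-!
Write `L = log n` and `ψ = L - log L + c`. Then `e^ψ = n e^c / L`, so
`ψ e^ψ = n e^c (1 - (log L - c) / L)`, and the tangent-line bound `log y ≤ y - 1` at
`y = L e^{-(1+c)}` gives `log L - c ≤ L e^{-(1+c)}`, i.e. `ψ e^ψ ≥ (e^c - 1/e) n`.
For `c = 0.862` the constant exceeds `2.00001` by a Taylor lower bound for `e^{0.862}`.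
-/

open Real

lemma log_le_add_mul_exp_neg {x : ℝ} (hx : 0 < x) (a : ℝ) :
    log x ≤ a + x * exp (-(1 + a)) := by
  have h := log_le_sub_one_of_pos (mul_pos hx (exp_pos (-(1 + a))))
  rw [log_mul hx.ne' (exp_ne_zero _), log_exp] at h
  linarith

lemma exp_sub_inv_exp_mul_le {x : ℝ} (hx : 1 < x) (c : ℝ) :
    (exp c - 1 / exp 1) * x ≤
      (log x - log (log x) + c) * exp (log x - log (log x) + c) := by
  have hx0 : 0 < x := by linarith
  have hL : 0 < log x := log_pos hx
  set L := log x
  have hexp : exp (L - log L + c) = x / L * exp c := by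
    rw [exp_add, exp_sub, exp_log hx0, exp_log hL]
  have hinv : 1 / exp 1 = exp c * exp (-(1 + c)) := by
    rw [← exp_add, one_div, ← exp_neg]
    ring_nf
  have hgap : (L - log L + c) * (x / L * exp c) - (exp c - 1 / exp 1) * x =
      x / L * exp c * (c + L * exp (-(1 + c)) - log L) := by
    rw [hinv]
    field_simp
    ring
  have hnonneg : 0 ≤ x / L * exp c * (c + L * exp (-(1 + c)) - log L) := by
    have := log_le_add_mul_exp_neg hL c
    have : 0 ≤ c + L * exp (-(1 + c)) - log L := by linarith
    positivity
  rw [hexp]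
  linarith

lemma two_point_00001_lt_exp_sub_inv_exp : (2.00001 : ℝ) < exp 0.862 - 1 / exp 1 := by
  have hexp : (2.3678909 : ℝ) ≤ exp 0.862 := by
    refine le_trans ?_ (sum_le_exp_of_nonneg (x := 0.862) (by norm_num) 9)
    simp only [Finset.sum_range_succ, Finset.sum_range_zero, Nat.factorial]
    norm_num
  have hinv : 1 / exp 1 < 0.3678795 := by
    rw [div_lt_iff₀ (exp_pos 1)]
    linarith [exp_one_gt_d9]
  linarith

theorem stmt_14 (n : ℕ) (hn : 1 < n) :
    ((Real.log n - Real.log (Real.log n) + 0.862) *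
        Real.exp (Real.log n - Real.log (Real.log n) + 0.862) ≥
      (Real.exp 0.862 - 1 / Real.exp 1) * n) ∧
    (Real.exp 0.862 - 1 / Real.exp 1) * n > 2.00001 * n ∧
    2 * n / ((Real.log n - Real.log (Real.log n) + 0.862) *
        Real.exp (Real.log n - Real.log (Real.log n) + 0.862)) < 1 := by
  have hn1 : (1 : ℝ) < n := by exact_mod_cast hn
  have hbound := exp_sub_inv_exp_mul_le hn1 0.862
  have hconst : 2.00001 * (n : ℝ) < (exp 0.862 - 1 / exp 1) * n :=
    mul_lt_mul_of_pos_right two_point_00001_lt_exp_sub_inv_exp (by linarith)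
  have h2n : 2 * (n : ℝ) < 2.00001 * n := by linarith
  exact ⟨hbound, hconst, (div_lt_one (by linarith)).2 (by linarith)⟩
end
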